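/- arXiv:2001.09892 — 2 statements merged into one kernel-verified Lean document; each statement's English description precedes it below -/
import Mathlib

section
/- Let n ≥ 1, p ≥ 2, s ∈ (0,1), and let u : ℝⁿ → ℝ be measurable. Fix x ∈ ℝⁿ and suppose there exist z_x ∈ ℝⁿ and r_x ∈ (0, |x−z_x|/2) such that u(x) ≠ u(z) for every z ∈ B_{r_x}(z_x). Then there exists a constant c_x > 0 such that for all r ∈ (0, r_x), D_r^{s,p} u(x) ≥ c_x (where the integral defining D_r^{s,p} u(x) is interpreted as a value in [0,∞]). -/
/-!
On the ball `B = B_{r_x}(x - z_x)` every `y` has `‖y‖ > r_x` (since `‖x - z_x‖ > 2 r_x`) and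
`x - y ∈ B_{r_x}(z_x)`, so the integrand of `D_r^{s,p} u(x)` is strictly positive there. For
`r < r_x` and `s ≥ 0`, replacing `‖y‖² - r²` by the larger `‖y‖²` only decreases the integrand, so the
`r`-independent constant `c_x = ∫_B` (integrand at `r = 0`) works; it is positive because `B`
has positive Lebesgue measure.
-/

open MeasureTheory
open scoped ENNReal

theorem lt_norm_of_mem_ball {E : Type*} [SeminormedAddCommGroup E] {a y : E} {ρ : ℝ}
    (hy : y ∈ Metric.ball a ρ) : ‖a‖ - ρ < ‖y‖ := by
  rw [mem_ball_iff_norm'] at hy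
  linarith [norm_sub_norm_le a y]

theorem sub_mem_ball_of_mem_ball_sub {E : Type*} [SeminormedAddCommGroup E] {x z y : E} {ρ : ℝ}
    (hy : y ∈ Metric.ball (x - z) ρ) : x - y ∈ Metric.ball z ρ := by
  rw [mem_ball_iff_norm] at hy ⊢
  rwa [show x - y - z = -(y - (x - z)) by abel, norm_neg]

theorem setLIntegral_pos_of_forall_pos {α : Type*} [MeasurableSpace α] {μ : Measure α}
    {f : α → ℝ≥0∞} {s : Set α} (hf : Measurable f) (hpos : ∀ a ∈ s, 0 < f a) (hs : 0 < μ s) :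
    0 < ∫⁻ a in s, f a ∂μ := by
  have hsupp : s ⊆ Function.support f := fun a ha => (hpos a ha).ne'
  rwa [setLIntegral_pos_iff hf, Set.inter_eq_right.mpr hsupp]

section FractionalKernel

variable {n : ℕ} (u : EuclideanSpace ℝ (Fin n) → ℝ) (x : EuclideanSpace ℝ (Fin n)) (p s r : ℝ)

/-- The integrand of `D_r^{s,p} u(x)`. -/
noncomputable def fractionalKernel (y : EuclideanSpace ℝ (Fin n)) : ℝ≥0∞ :=
  ENNReal.ofReal ((|u x - u (x - y)| / ‖y‖ ^ s) ^ (p - 2) /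
    (‖y‖ ^ (n : ℝ) * (‖y‖ ^ 2 - r ^ 2) ^ s))

variable {u x p s r}

theorem measurable_fractionalKernel (hu : Measurable u) :
    Measurable (fractionalKernel u x p s r) := by
  unfold fractionalKernel
  fun_prop

theorem fractionalKernel_pos {y : EuclideanSpace ℝ (Fin n)} (hr₀ : 0 ≤ r) (hr : r < ‖y‖)
    (hne : u x ≠ u (x - y)) : 0 < fractionalKernel u x p s r y := by
  have hy : 0 < ‖y‖ := hr₀.trans_lt hr
  have hden : 0 < ‖y‖ ^ 2 - r ^ 2 := sub_pos.mpr (pow_lt_pow_left₀ hr hr₀ two_ne_zero)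
  have hdiff : 0 < |u x - u (x - y)| := abs_pos.mpr (sub_ne_zero.mpr hne)
  unfold fractionalKernel
  rw [ENNReal.ofReal_pos]
  positivity

theorem fractionalKernel_zero_le (hs : 0 ≤ s) {y : EuclideanSpace ℝ (Fin n)} (hr₀ : 0 ≤ r)
    (hr : r < ‖y‖) : fractionalKernel u x p s 0 y ≤ fractionalKernel u x p s r y := by
  have hy : 0 < ‖y‖ := hr₀.trans_lt hr
  have hden : 0 < ‖y‖ ^ 2 - r ^ 2 := sub_pos.mpr (pow_lt_pow_left₀ hr hr₀ two_ne_zero)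
  unfold fractionalKernel
  rw [zero_pow two_ne_zero, sub_zero]
  gcongr
  exact sub_le_self _ (sq_nonneg r)

end FractionalKernel

theorem Dker_bounded_below_general
    (n : ℕ) (p s : ℝ) (hs : s ∈ Set.Ioo (0:ℝ) 1)
    (u : EuclideanSpace ℝ (Fin n) → ℝ) (humeas : Measurable u)
    (x zx : EuclideanSpace ℝ (Fin n)) (rx : ℝ)
    (hrx : rx ∈ Set.Ioo (0:ℝ) (‖x - zx‖ / 2))
    (hne : ∀ z ∈ Metric.ball zx rx, u x ≠ u z) :
    ∃ c : ℝ≥0∞, 0 < c ∧ ∀ r ∈ Set.Ioo (0:ℝ) rx,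
      c ≤ ∫⁻ y in {y : EuclideanSpace ℝ (Fin n) | r < ‖y‖},
            ENNReal.ofReal ((|u x - u (x - y)| / ‖y‖ ^ s) ^ (p - 2) /
              (‖y‖ ^ (n : ℝ) * (‖y‖ ^ 2 - r ^ 2) ^ s)) := by
  set B := Metric.ball (x - zx) rx
  have hnorm : ∀ y ∈ B, rx < ‖y‖ := fun y hy => by
    linarith [lt_norm_of_mem_ball hy, hrx.2]
  refine ⟨∫⁻ y in B, fractionalKernel u x p s 0 y, ?_, fun r hr => ?_⟩
  · refine setLIntegral_pos_of_forall_pos (measurable_fractionalKernel humeas) (fun y hy => ?_)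
      (Metric.measure_ball_pos _ _ hrx.1)
    exact fractionalKernel_pos le_rfl (hrx.1.trans (hnorm y hy))
      (hne _ (sub_mem_ball_of_mem_ball_sub hy))
  · have hlt : ∀ y ∈ B, r < ‖y‖ := fun y hy => hr.2.trans (hnorm y hy)
    calc ∫⁻ y in B, fractionalKernel u x p s 0 y
        ≤ ∫⁻ y in B, fractionalKernel u x p s r y :=
          setLIntegral_mono (measurable_fractionalKernel humeas) fun y hy =>
            fractionalKernel_zero_le hs.1.le hr.1.le (hlt y hy)
      _ ≤ _ := lintegral_mono_set hlt

/-- If `u(x) ≠ u(z)` on a ball `B_{r_x}(z_x)` with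
`0 < r_x < |x - z_x|/2`, then `D_r^{s,p} u(x)` (as a value in `[0,∞]`) is bounded below
by a positive constant `c_x` for all `r ∈ (0, r_x)`. -/
theorem Dker_bounded_below
    (n : ℕ) (hn : 1 ≤ n) (p s : ℝ) (hp : 2 ≤ p) (hs : s ∈ Set.Ioo (0:ℝ) 1)
    (u : EuclideanSpace ℝ (Fin n) → ℝ) (humeas : Measurable u)
    (x zx : EuclideanSpace ℝ (Fin n)) (rx : ℝ)
    (hrx : rx ∈ Set.Ioo (0:ℝ) (‖x - zx‖ / 2))
    (hne : ∀ z ∈ Metric.ball zx rx, u x ≠ u z) :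
    ∃ c : ℝ≥0∞, 0 < c ∧ ∀ r ∈ Set.Ioo (0:ℝ) rx,
      c ≤ ∫⁻ y in {y : EuclideanSpace ℝ (Fin n) | r < ‖y‖},
            ENNReal.ofReal ((|u x - u (x - y)| / ‖y‖ ^ s) ^ (p - 2) /
              (‖y‖ ^ (n : ℝ) * (‖y‖ ^ 2 - r ^ 2) ^ s)) :=
  Dker_bounded_below_general n p s hs u humeas x zx rx hrx hne
end

section
/- Let s ∈ (0,1). Then the function r ↦ ∫₁^{1/r} t( (t²−1)^{−s} − t^{−2s} ) dt is O(1) as r → 0⁺; that is, there exist C > 0 and r₀ ∈ (0,1) such that 0 ≤ ∫₁^{1/r} t( (t²−1)^{−s} − t^{−2s} ) dt ≤ C for all r ∈ (0, r₀). -/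
open MeasureTheory Filter Real Set
open scoped Topology

/-! Writing `t ^ (-(2 * s)) = (t ^ 2) ^ (-s)`, the integrand has the explicit primitive
`((t ^ 2 - 1) ^ (1 - s) - (t ^ 2) ^ (1 - s)) / (2 * (1 - s))`. Hence the integral over `(1, b)`
equals `(1 + (b ^ 2 - 1) ^ (1 - s) - (b ^ 2) ^ (1 - s)) / (2 * (1 - s))`, which is at most
`1 / (2 * (1 - s))` by monotonicity of `x ↦ x ^ (1 - s)`. The integrand is nonnegative because
`x ↦ x ^ (-s)` is antitone. -/

lemma Real.rpow_two_mul {x : ℝ} (hx : 0 ≤ x) (y : ℝ) : x ^ (2 * y) = (x ^ 2) ^ y := by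
  rw [Real.rpow_mul hx, Real.rpow_two]

lemma hasDerivAt_sq_sub_one_rpow_sub_sq_rpow {p t : ℝ} (hp : p ≠ 0) (ht : 1 < t) :
    HasDerivAt (fun t : ℝ => ((t ^ 2 - 1) ^ p - (t ^ 2) ^ p) / (2 * p))
      (t * ((t ^ 2 - 1) ^ (p - 1) - (t ^ 2) ^ (p - 1))) t := by
  have hsq : HasDerivAt (fun t : ℝ => t ^ 2) (2 * t) t := by
    simpa using hasDerivAt_pow 2 t
  have hpos : 0 < t ^ 2 - 1 := by nlinarith
  refine ((((hsq.sub_const 1).rpow_const (Or.inl hpos.ne')).sub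
    (hsq.rpow_const (Or.inl (by positivity)))).div_const (2 * p)).congr_deriv ?_
  field_simp

lemma mul_sq_sub_one_rpow_neg_sub_rpow_neg_two_mul_nonneg {s t : ℝ} (hs : 0 ≤ s) (ht : 1 < t) :
    0 ≤ t * ((t ^ 2 - 1) ^ (-s) - t ^ (-(2 * s))) := by
  refine mul_nonneg (by linarith) (sub_nonneg.2 ?_)
  rw [← mul_neg, Real.rpow_two_mul (by linarith)]
  exact Real.rpow_le_rpow_of_nonpos (by nlinarith) (by linarith) (by linarith)

lemma integral_Ioo_one_mul_sq_sub_one_rpow_neg_sub_rpow_neg_two_mul {s b : ℝ} (hs0 : 0 ≤ s)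
    (hs1 : s < 1) (hb : 1 ≤ b) :
    ∫ t in Ioo 1 b, t * ((t ^ 2 - 1) ^ (-s) - t ^ (-(2 * s)))
      = (1 + (b ^ 2 - 1) ^ (1 - s) - (b ^ 2) ^ (1 - s)) / (2 * (1 - s)) := by
  set F := fun t : ℝ => ((t ^ 2 - 1) ^ (1 - s) - (t ^ 2) ^ (1 - s)) / (2 * (1 - s))
  have hderiv : ∀ t ∈ Ioo 1 b, HasDerivAt F (t * ((t ^ 2 - 1) ^ (-s) - t ^ (-(2 * s)))) t := by
    intro t ht
    convert hasDerivAt_sq_sub_one_rpow_sub_sq_rpow (p := 1 - s) (by linarith) ht.1 using 1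
    rw [← mul_neg, Real.rpow_two_mul (by linarith [ht.1])]
    ring_nf
  have hcont : ContinuousOn F (Icc 1 b) := by
    refine ContinuousOn.div_const (ContinuousOn.sub ?_ ?_) _ <;>
      exact ContinuousOn.rpow_const (by fun_prop) fun _ _ => Or.inr (by linarith)
  have hint : IntervalIntegrable (fun t => t * ((t ^ 2 - 1) ^ (-s) - t ^ (-(2 * s)))) volume 1 b :=
    (intervalIntegrable_iff_integrableOn_Ioc_of_le hb).2 <|
      intervalIntegral.integrableOn_deriv_of_nonneg hcont hderiv fun t ht =>
        mul_sq_sub_one_rpow_neg_sub_rpow_neg_two_mul_nonneg hs0 ht.1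
  rw [← integral_Ioc_eq_integral_Ioo, ← intervalIntegral.integral_of_le hb,
    intervalIntegral.integral_eq_sub_of_hasDerivAt_of_le hb hcont hderiv hint]
  simp [F, Real.zero_rpow (by linarith : 1 - s ≠ 0)]
  ring

/-- For `s ∈ (0,1)`, `∫₁^{1/r} t((t²-1)^{-s} - t^{-2s}) dt = O(1)`
as `r → 0⁺`. -/
theorem integral_asymptotic_O_one (s : ℝ) (hs : s ∈ Set.Ioo (0:ℝ) 1) :
    ∃ C > (0:ℝ), ∃ r₀ ∈ Set.Ioo (0:ℝ) 1, ∀ r ∈ Set.Ioo (0:ℝ) r₀,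
      0 ≤ (∫ t in Set.Ioo (1:ℝ) r⁻¹, t * ((t ^ 2 - 1) ^ (-s) - t ^ (-(2 * s)))) ∧
      (∫ t in Set.Ioo (1:ℝ) r⁻¹, t * ((t ^ 2 - 1) ^ (-s) - t ^ (-(2 * s)))) ≤ C := by
  obtain ⟨hs0, hs1⟩ := hs
  refine ⟨1 / (2 * (1 - s)), by bound, 1 / 2, by norm_num, fun r hr => ?_⟩
  have hb : 1 < r⁻¹ := (one_lt_inv₀ hr.1).2 (by linarith [hr.2])
  constructor
  · exact setIntegral_nonneg measurableSet_Ioo fun t ht =>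
      mul_sq_sub_one_rpow_neg_sub_rpow_neg_two_mul_nonneg hs0.le ht.1
  · rw [integral_Ioo_one_mul_sq_sub_one_rpow_neg_sub_rpow_neg_two_mul hs0.le hs1 hb.le]
    have hmono : (r⁻¹ ^ 2 - 1) ^ (1 - s) ≤ (r⁻¹ ^ 2) ^ (1 - s) :=
      Real.rpow_le_rpow (by nlinarith) (by linarith) (by linarith)
    gcongr
    linarith
end
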